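/- arXiv:2409.19376 — 2 statements merged into one kernel-verified Lean document; each statement's English description precedes it below -/
import Mathlib

section
/- Let u = (q_{ij}) be an n×n magic unitary in a unital C*-algebra that commutes with a {0,1} adjacency matrix A of a directed graph on vertices {1,…,n} (i.e., Σ_k A_{ik} q_{kj} = Σ_k q_{ik} A_{kj} for all i,j). Then for every edge γ (i.e., pair with A_{r(γ) s(γ)} = 1) and every non-edge pair (i,k) (A_{ki} = 0), one has q_{s(γ) i} q_{r(γ) k} = 0 and q_{r(γ) k} q_{s(γ) i} = 0. -/
lemma magic_orth_aux {B : Type*} [NormedRing B] [StarRing B]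
    [CStarRing B] [NormedAlgebra ℂ B] [StarModule ℂ B] [CompleteSpace B]
    {n : ℕ} (p : Fin n → B)
    (hproj : ∀ j, IsIdempotentElem (p j) ∧ star (p j) = p j)
    (hsum : ∑ j, p j = 1) {i j : Fin n} (hij : j ≠ i) : p j * p i = 0 := by
  letI : CStarAlgebra B := {}
  letI := CStarAlgebra.spectralOrder B
  haveI := CStarAlgebra.spectralOrderedRing B
  have hterm : ∀ l, star (p l * p i) * (p l * p i) = p i * p l * p i := by
    intro l
    rw [star_mul, (hproj l).2, (hproj i).2, mul_assoc (p i) (p l),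
      ← mul_assoc (p l) (p l), (hproj l).1.eq, ← mul_assoc]
  have key : ∑ l, p i * p l * p i = p i := by
    rw [← Finset.sum_mul, ← Finset.mul_sum, hsum, mul_one, (hproj i).1.eq]
  have hsplit := Finset.add_sum_erase Finset.univ (fun l => p i * p l * p i)
    (Finset.mem_univ i)
  rw [key] at hsplit
  simp only [(hproj i).1.eq, add_eq_left] at hsplit
  have hzero : ∀ l ∈ Finset.univ.erase i, p i * p l * p i = 0 := by
    intro l hl
    have hnn : ∀ l ∈ Finset.univ.erase i, 0 ≤ p i * p l * p i := fun l _ =>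
      hterm l ▸ star_mul_self_nonneg _
    exact (Finset.sum_eq_zero_iff_of_nonneg hnn).mp hsplit l hl
  have := hzero j (Finset.mem_erase.mpr ⟨hij, Finset.mem_univ j⟩)
  rw [← hterm j] at this
  exact CStarRing.star_mul_self_eq_zero_iff _ |>.mp this

/-- if a magic unitary `q` in a unital C*-algebra commutes with the `{0,1}`
adjacency matrix `A` of a directed graph (`A_{vw} = 1` iff there is an edge with range `v` and
source `w`), then for every edge `γ` (with source `a` and range `b`, i.e. `A b a = 1`) and
every non-edge pair `(i, k)` (i.e. `A k i = 0`) one has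
`q_{s(γ) i} q_{r(γ) k} = 0 = q_{r(γ) k} q_{s(γ) i}`. -/
theorem magic_unitary_commuting_adjacency_relations {B : Type*} [NormedRing B] [StarRing B]
    [CStarRing B] [NormedAlgebra ℂ B] [StarModule ℂ B] [CompleteSpace B]
    {n : ℕ} (q : Fin n → Fin n → B)
    (hproj : ∀ i j, IsIdempotentElem (q i j) ∧ star (q i j) = q i j)
    (hrow : ∀ i, ∑ j, q i j = 1) (hcol : ∀ j, ∑ i, q i j = 1)
    (A : Matrix (Fin n) (Fin n) ℕ) (hA01 : ∀ v w, A v w = 0 ∨ A v w = 1)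
    (hcomm : ∀ i j, ∑ k, (A i k : ℕ) • q k j = ∑ k, (A k j : ℕ) • q i k) :
    ∀ a b : Fin n, A b a = 1 → ∀ i k : Fin n, A k i = 0 →
      q a i * q b k = 0 ∧ q b k * q a i = 0 := by
  intro a b hba i k hki
  -- column orthogonality: for l ≠ a, q a i * q l i = 0
  have hcolorth : ∀ l, l ≠ a → q a i * q l i = 0 := by
    intro l hl
    have := magic_orth_aux (fun m => q m i) (fun m => hproj m i) (hcol i)
      (i := l) (j := a) hl.symm
    simpa using this
  have hroworth : ∀ l, l ≠ k → q b l * q b k = 0 := by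
    intro l hl
    exact magic_orth_aux (fun m => q b m) (fun m => hproj b m) (hrow b) hl
  -- step 1: q a i = q a i * ∑ l, (A b l) • q l i
  have step1 : q a i * ∑ l, (A b l : ℕ) • q l i = q a i := by
    rw [Finset.mul_sum]
    rw [Finset.sum_eq_single a]
    · rw [mul_smul_comm, (hproj a i).1.eq, hba, one_smul]
    · intro l _ hl
      rw [mul_smul_comm, hcolorth l hl, smul_zero]
    · intro h; exact absurd (Finset.mem_univ a) h
  have step2 : q a i = ∑ l, (A l i : ℕ) • (q a i * q b l) := by
    conv_lhs => rw [← step1, hcomm b i]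
    rw [Finset.mul_sum]
    exact Finset.sum_congr rfl fun l _ => (mul_smul_comm _ _ _)
  have main : q a i * q b k = 0 := by
    have := congrArg (· * q b k) step2
    simp only [Finset.sum_mul, smul_mul_assoc] at this
    rw [this, Finset.sum_eq_single k]
    · rw [mul_assoc, (hproj b k).1.eq, hki, zero_smul]
    · intro l _ hl
      rw [mul_assoc, hroworth l hl, mul_zero, smul_zero]
    · intro h; exact absurd (Finset.mem_univ k) h
  refine ⟨main, ?_⟩
  have := congrArg star main
  rwa [star_mul, (hproj a i).2, (hproj b k).2, star_zero] at this
end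

section
/- Let H be a Hilbert space and P, Q orthogonal projections on H. Then the sequence (P Q P)^n converges in the strong operator topology to the orthogonal projection onto the intersection of the ranges of P and Q (i.e., to P ∧ Q). -/
/-! The operator `T = PQP` satisfies `0 ≤ T ≤ 1`, so `a n = re ⟪Tⁿx, x⟫` is antitone and bounded
below, hence convergent. Self-adjointness gives `‖Tᵐx - Tⁿx‖² = a (2m) + a (2n) - 2 a (m + n)`, so
the orbit `Tⁿx` is Cauchy. Its limit `y` is fixed by `T`, and `x - y` is orthogonal to every fixed
point `z` of `T` because `⟪Tⁿx, z⟫ = ⟪x, Tⁿz⟫ = ⟪x, z⟫`; so `y` is the orthogonal projection of `x`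
onto the fixed space of `T`, which for `T = PQP` is `ran P ∩ ran Q`. -/

open Filter Topology RCLike
open scoped InnerProductSpace
open ContinuousLinearMap (IsIdempotentElem.toLinearMap IsIdempotentElem.isClosed_range)

theorem IsStarProjection.conjugate_mem_Icc {R : Type*} [Ring R] [PartialOrder R] [StarRing R]
    [StarOrderedRing R] {p q : R} (hp : IsStarProjection p) (hq : IsStarProjection q) :
    p * q * p ∈ Set.Icc 0 1 := by
  refine ⟨hp.isSelfAdjoint.conjugate_nonneg hq.nonneg, ?_⟩
  calc p * q * p ≤ p * 1 * p := hp.isSelfAdjoint.conjugate_le_conjugate hq.le_one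
    _ = p := by rw [mul_one, hp.isIdempotentElem.eq]
    _ ≤ 1 := hp.le_one

section InnerProductSpace

variable {𝕜 E : Type*} [RCLike 𝕜] [NormedAddCommGroup E] [InnerProductSpace 𝕜 E] [CompleteSpace E]

theorem IsStarProjection.re_inner_apply_self_eq_norm_sq {A : E →L[𝕜] E} (hA : IsStarProjection A)
    (x : E) : re ⟪A x, x⟫_𝕜 = ‖A x‖ ^ 2 := by
  calc re ⟪A x, x⟫_𝕜 = re ⟪A (A x), x⟫_𝕜 := by
        rw [← mul_apply_eq_comp, hA.isIdempotentElem.eq]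
    _ = re ⟪A x, A x⟫_𝕜 := congrArg re (hA.isSelfAdjoint.isSymmetric (A x) x)
    _ = ‖A x‖ ^ 2 := inner_self_eq_norm_sq _

theorem IsStarProjection.conjugate_apply_eq_self_iff {P Q : E →L[𝕜] E} (hP : IsStarProjection P)
    (hQ : IsStarProjection Q) {x : E} : (P * Q * P) x = x ↔ P x = x ∧ Q x = x := by
  refine ⟨fun h => ?_, fun ⟨hPx, hQx⟩ => by simp only [mul_apply_eq_comp, hPx, hQx]⟩
  have hPx : P x = x := by
    rw [← h, ← mul_apply_eq_comp, ← mul_assoc, ← mul_assoc, hP.isIdempotentElem.eq]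
  have hQx : ⟪Q x, x⟫_𝕜 = ⟪x, x⟫_𝕜 := by
    calc ⟪Q x, x⟫_𝕜 = ⟪Q (P x), P x⟫_𝕜 := by rw [hPx]
      _ = ⟪(P * Q * P) x, x⟫_𝕜 := (hP.isSelfAdjoint.isSymmetric _ _).symm
      _ = ⟪x, x⟫_𝕜 := by rw [h]
  have : ‖x - Q x‖ ^ 2 = 0 := by
    simpa [inner_sub_left, hQx] using (hQ.one_sub.re_inner_apply_self_eq_norm_sq x).symm
  refine ⟨hPx, ?_⟩
  rwa [sq_eq_zero_iff, norm_eq_zero, sub_eq_zero, eq_comm] at this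

variable {T : E →L[𝕜] E}

theorem IsSelfAdjoint.inner_pow_apply_pow_apply (hT : IsSelfAdjoint T) (x : E) (m n : ℕ) :
    ⟪(T ^ m) x, (T ^ n) x⟫_𝕜 = ⟪(T ^ (m + n)) x, x⟫_𝕜 := by
  calc ⟪(T ^ m) x, (T ^ n) x⟫_𝕜 = ⟪(T ^ n) ((T ^ m) x), x⟫_𝕜 := ((hT.pow n).isSymmetric _ _).symm
    _ = ⟪(T ^ (m + n)) x, x⟫_𝕜 := by rw [← mul_apply_eq_comp, ← pow_add, add_comm]

theorem IsSelfAdjoint.cauchySeq_pow_apply (hT : IsSelfAdjoint T) {x : E} {c : ℝ}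
    (hc : Tendsto (fun n => re ⟪(T ^ n) x, x⟫_𝕜) atTop (𝓝 c)) :
    CauchySeq fun n => (T ^ n) x := by
  set a := fun n => re ⟪(T ^ n) x, x⟫_𝕜
  have hdist : ∀ m n : ℕ,
      dist ((T ^ m) x) ((T ^ n) x) = √(a (m + m) + a (n + n) - 2 * a (m + n)) := by
    intro m n
    rw [dist_eq_norm, ← Real.sqrt_sq (norm_nonneg _), @norm_sub_sq 𝕜,
      ← inner_self_eq_norm_sq (𝕜 := 𝕜), ← inner_self_eq_norm_sq (𝕜 := 𝕜),
      hT.inner_pow_apply_pow_apply, hT.inner_pow_apply_pow_apply, hT.inner_pow_apply_pow_apply]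
    congr 1
    ring
  have hfst : Tendsto (Prod.fst : ℕ × ℕ → ℕ) atTop atTop :=
    tendsto_atTop_atTop_of_monotone monotone_fst fun b => ⟨(b, 0), le_rfl⟩
  have hsnd : Tendsto (Prod.snd : ℕ × ℕ → ℕ) atTop atTop :=
    tendsto_atTop_atTop_of_monotone monotone_snd fun b => ⟨(0, b), le_rfl⟩
  have hlim : Tendsto (fun p : ℕ × ℕ => a (p.1 + p.1) + a (p.2 + p.2) - 2 * a (p.1 + p.2)) atTop
      (𝓝 (c + c - 2 * c)) :=
    ((hc.comp (hfst.atTop_add_atTop hfst)).add (hc.comp (hsnd.atTop_add_atTop hsnd))).sub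
      ((hc.comp (hfst.atTop_add_atTop hsnd)).const_mul 2)
  rw [cauchySeq_iff_tendsto_dist_atTop_0]
  simp_rw [hdist]
  rw [show c + c - 2 * c = 0 by ring] at hlim
  simpa only [Function.comp_def, Real.sqrt_zero] using (Real.continuous_sqrt.tendsto 0).comp hlim

theorem IsSelfAdjoint.starProjection_eq_of_tendsto_pow_apply (hT : IsSelfAdjoint T)
    {K : Submodule 𝕜 E} [K.HasOrthogonalProjection] (hK : ∀ y, T y = y ↔ y ∈ K) {x y : E}
    (hy : Tendsto (fun n => (T ^ n) x) atTop (𝓝 y)) : K.starProjection x = y := by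
  refine Submodule.eq_starProjection_of_mem_of_inner_eq_zero ?_ fun z hz => ?_
  · rw [← hK]
    refine tendsto_nhds_unique ((T.continuous.tendsto y).comp hy) ?_
    simpa only [Function.comp_def, pow_succ', mul_apply_eq_comp] using
      hy.comp (tendsto_add_atTop_nat 1)
  · have hfix : ∀ n, (T ^ n) z = z := fun n => by
      rw [pow_apply_eq_iterate]; exact Function.IsFixedPt.iterate ((hK z).mpr hz) n
    have hconst : ∀ n, ⟪(T ^ n) x, z⟫_𝕜 = ⟪x, z⟫_𝕜 := fun n =>
      calc ⟪(T ^ n) x, z⟫_𝕜 = ⟪x, (T ^ n) z⟫_𝕜 := (hT.pow n).isSymmetric x z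
        _ = ⟪x, z⟫_𝕜 := by rw [hfix]
    have : Tendsto (fun n => ⟪(T ^ n) x, z⟫_𝕜) atTop (𝓝 ⟪y, z⟫_𝕜) := hy.inner tendsto_const_nhds
    rw [inner_sub_left, tendsto_nhds_unique this (by simp only [hconst]; exact tendsto_const_nhds),
      sub_self]

end InnerProductSpace

theorem tendsto_pow_apply_starProjection_of_nonneg_of_le_one {H : Type*} [NormedAddCommGroup H]
    [InnerProductSpace ℂ H] [CompleteSpace H] {T : H →L[ℂ] H} (h0 : 0 ≤ T) (h1 : T ≤ 1)
    {K : Submodule ℂ H} [K.HasOrthogonalProjection] (hK : ∀ y, T y = y ↔ y ∈ K) (x : H) :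
    Tendsto (fun n => (T ^ n) x) atTop (𝓝 (K.starProjection x)) := by
  have hanti : Antitone fun n => re ⟪(T ^ n) x, x⟫_ℂ := fun m n hmn => by
    simpa [inner_sub_left] using (CStarAlgebra.pow_antitone h0 h1 hmn).re_inner_nonneg_left x
  have hbdd : BddBelow (Set.range fun n => re ⟪(T ^ n) x, x⟫_ℂ) :=
    ⟨0, Set.forall_mem_range.2 fun n => by
      simpa using (CStarAlgebra.pow_nonneg h0 n).re_inner_nonneg_left x⟩
  have hT := IsSelfAdjoint.of_nonneg h0
  obtain ⟨y, hy⟩ := cauchySeq_tendsto_of_complete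
    (hT.cauchySeq_pow_apply (tendsto_atTop_ciInf hanti hbdd))
  rwa [hT.starProjection_eq_of_tendsto_pow_apply hK hy]

open Filter in
/-- for orthogonal projections `P, Q` on a Hilbert space, `(PQP)^n` converges
in the strong operator topology to the orthogonal projection `P ∧ Q` onto
`ran(P) ∩ ran(Q)`. -/
theorem pqp_pow_tendsto_inf_projection {H : Type*} [NormedAddCommGroup H]
    [InnerProductSpace ℂ H] [CompleteSpace H]
    (P Q : H →L[ℂ] H) (hP : IsIdempotentElem P) (hP' : IsSelfAdjoint P)
    (hQ : IsIdempotentElem Q) (hQ' : IsSelfAdjoint Q) :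
    ∃ R : H →L[ℂ] H, IsIdempotentElem R ∧ IsSelfAdjoint R ∧
      LinearMap.range (R : H →ₗ[ℂ] H) = LinearMap.range (P : H →ₗ[ℂ] H) ⊓ LinearMap.range (Q : H →ₗ[ℂ] H) ∧
      ∀ x : H, Tendsto (fun n : ℕ => ((P * Q * P) ^ n) x) atTop (nhds (R x)) := by
  have hPs : IsStarProjection P := ⟨hP, hP'⟩
  have hQs : IsStarProjection Q := ⟨hQ, hQ'⟩
  set K := LinearMap.range (P : H →ₗ[ℂ] H) ⊓ LinearMap.range (Q : H →ₗ[ℂ] H)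
  have : CompleteSpace K := (hP.isClosed_range.inter hQ.isClosed_range).completeSpace_coe
  have hK : ∀ y, (P * Q * P) y = y ↔ y ∈ K := fun y => by
    rw [hPs.conjugate_apply_eq_self_iff hQs, Submodule.mem_inf,
      LinearMap.IsIdempotentElem.mem_range_iff hP.toLinearMap,
      LinearMap.IsIdempotentElem.mem_range_iff hQ.toLinearMap]
    rfl
  obtain ⟨h0, h1⟩ := hPs.conjugate_mem_Icc hQs
  exact ⟨K.starProjection, K.isIdempotentElem_starProjection, isSelfAdjoint_starProjection K,
    K.range_starProjection, tendsto_pow_apply_starProjection_of_nonneg_of_le_one h0 h1 hK⟩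
end
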